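/- Let q be a power of an odd prime and let G = 1 + 𝔤 be a pattern subgroup of UT_n(F_{q^k}), regarded over F_q, with † an involutive F_q-algebra antiautomorphism of 𝔤 satisfying (α e_ij)† ∈ F_{q^k}^× e_{j̄ ī} for all α ∈ F_{q^k}^×. Let 𝔲 = {x ∈ 𝔤 | x† = −x}, let 𝔥 = {x ∈ 𝔤 | x_ij = 0 if j ≤ n/2}, and let H = 1 + 𝔥. Let λ ∈ 𝔲* and let η ∈ 𝔤* be the unique extension of λ with η(x†) = −η(x) for all x ∈ 𝔤. Then {μ|_𝔲 | μ ∈ Hη} = H·λ, where Hη is the orbit of η under (hη)(x) = η(h⁻¹x) and H·λ is the orbit of λ under (h·λ)(x) = λ(h⁻¹ x (h⁻¹)†). -/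

import Mathlib

open Matrix

section PatternGroups

variable (F : Type) [Field F] (E : Type) [Field E] [Algebra F E] {n : ℕ}

/-- The pattern subalgebra `𝔤 ⊆ 𝔲𝔱_n(E)` of matrices supported on the set `S` of strict
relations `i ≺ j` of a subposet of the usual linear order on `[n]`. -/
def patAlg (S : Set (Fin n × Fin n)) : Set (Matrix (Fin n) (Fin n) E) :=
  {x | ∀ i j : Fin n, (i, j) ∉ S → x i j = 0}

/-- The pattern subgroup `G = 1 + 𝔤`. -/
def patGrp (S : Set (Fin n × Fin n)) : Set (Matrix (Fin n) (Fin n) E) :=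
  {g | ∃ x ∈ patAlg E S, g = 1 + x}

/-- The two-sided ideal `𝔥 = {x ∈ 𝔤 | x_{ij} = 0 if j ≤ n/2}` (indices read 1-based). -/
def patHAlg (S : Set (Fin n × Fin n)) : Set (Matrix (Fin n) (Fin n) E) :=
  {x | x ∈ patAlg E S ∧ ∀ i j : Fin n, (j : ℕ) + 1 ≤ n / 2 → x i j = 0}

/-- The normal subgroup `H = 1 + 𝔥` of `G`. -/
def patHGrp (S : Set (Fin n × Fin n)) : Set (Matrix (Fin n) (Fin n) E) :=
  {g | ∃ x ∈ patHAlg E S, g = 1 + x}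

/-- The extension of `†` from `𝔤` to `G = 1 + 𝔤`: `(1+x)† = 1 + x†`. -/
def dagGrp (dag : Matrix (Fin n) (Fin n) E → Matrix (Fin n) (Fin n) E)
    (g : Matrix (Fin n) (Fin n) E) : Matrix (Fin n) (Fin n) E :=
  1 + dag (g - 1)

/-- The subgroup `U = {u ∈ G | u† = u⁻¹}` of the pattern group `G`. -/
def patUGrp (S : Set (Fin n × Fin n))
    (dag : Matrix (Fin n) (Fin n) E → Matrix (Fin n) (Fin n) E) :
    Set (Matrix (Fin n) (Fin n) E) :=
  {u | u ∈ patGrp E S ∧ u * dagGrp E dag u = 1 ∧ dagGrp E dag u * u = 1}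

/-- The set `𝔲 = {x ∈ 𝔤 | x† = -x}`. -/
def patUAlg (S : Set (Fin n × Fin n))
    (dag : Matrix (Fin n) (Fin n) E → Matrix (Fin n) (Fin n) E) :
    Set (Matrix (Fin n) (Fin n) E) :=
  {x | x ∈ patAlg E S ∧ dag x = -x}

/-- `†` is an involutive `F`-algebra antiautomorphism of the pattern algebra `𝔤` sending
each `α e_{ij}` (`α ∈ E^×`) into `E^× e_{\bar j \bar i}`, where `\bar i = n + 1 - i`. -/
structure IsPatternAntiInvolution (S : Set (Fin n × Fin n))
    (dag : Matrix (Fin n) (Fin n) E → Matrix (Fin n) (Fin n) E) : Prop where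
  map_mem : ∀ x ∈ patAlg E S, dag x ∈ patAlg E S
  map_add : ∀ x ∈ patAlg E S, ∀ y ∈ patAlg E S, dag (x + y) = dag x + dag y
  map_smul : ∀ (c : F), ∀ x ∈ patAlg E S,
    dag (algebraMap F E c • x) = algebraMap F E c • dag x
  map_mul : ∀ x ∈ patAlg E S, ∀ y ∈ patAlg E S, dag (x * y) = dag y * dag x
  invol : ∀ x ∈ patAlg E S, dag (dag x) = x
  elementary : ∀ i j : Fin n, (i, j) ∈ S → ∀ α : E, α ≠ 0 →
    ∃ β : E, β ≠ 0 ∧ dag (Matrix.single i j α) = Matrix.single j.rev i.rev β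

/-- A Springer morphism: a bijection `f : G → 𝔤` with `f(U) = 𝔲` and
`f(1+x) = x + Σ_{i ≥ 2} a_i x^i` with coefficients `a_i ∈ F`. -/
def IsSpringerMorphism (S : Set (Fin n × Fin n))
    (dag f : Matrix (Fin n) (Fin n) E → Matrix (Fin n) (Fin n) E) : Prop :=
  Set.BijOn f (patGrp E S) (patAlg E S) ∧
  f '' patUGrp E S dag = patUAlg E S dag ∧
  ∃ (N : ℕ) (a : ℕ → F), a 1 = 1 ∧
    ∀ x ∈ patAlg E S, f (1 + x) = ∑ i ∈ Finset.Ico 1 N, algebraMap F E (a i) • x ^ i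

/-- The orbit `G · w = {g w g† | g ∈ G}` of `w` under the action `g · x = g x g†`. -/
def patGrpDot (S : Set (Fin n × Fin n))
    (dag : Matrix (Fin n) (Fin n) E → Matrix (Fin n) (Fin n) E)
    (w : Matrix (Fin n) (Fin n) E) : Set (Matrix (Fin n) (Fin n) E) :=
  {z | ∃ g ∈ patGrp E S, z = g * w * dagGrp E dag g}

end PatternGroups

section Supercharacters

variable (F : Type) [Field F] (E : Type) [Field E] [Algebra F E] {n : ℕ}

/-- The orbit of `λ ∈ 𝔲*` under a subset `T ⊆ G` (for `T = G` or `T = H`), acting by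
`(g·λ)(x) = λ(g⁻¹ · x) = λ(g⁻¹ x (g⁻¹)†)`.  An element `λ ∈ 𝔲*` is recorded as a function
`𝔲 → F` (here represented via a functional `lam` on the full matrix space: only its values
on `𝔲` matter). -/
def patDualOrbit (S : Set (Fin n × Fin n))
    (dag : Matrix (Fin n) (Fin n) E → Matrix (Fin n) (Fin n) E)
    (T : Set (Matrix (Fin n) (Fin n) E))
    (lam : Module.Dual F (Matrix (Fin n) (Fin n) E)) :
    Set (↥(patUAlg E S dag) → F) :=
  {ψ | ∃ g ∈ T, ∀ x : ↥(patUAlg E S dag),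
    ψ x = lam (g⁻¹ * (x : Matrix (Fin n) (Fin n) E) * dagGrp E dag g⁻¹)}

/-- The supercharacter `χ_λ = (|H·λ|/|G·λ|) Σ_{μ ∈ G·λ} θ ∘ μ ∘ f` of `U`, for `λ ∈ 𝔲*`. -/
noncomputable def patSupchar (S : Set (Fin n × Fin n))
    (dag f : Matrix (Fin n) (Fin n) E → Matrix (Fin n) (Fin n) E)
    (θ : AddChar F ℂ) (lam : Module.Dual F (Matrix (Fin n) (Fin n) E))
    (u : Matrix (Fin n) (Fin n) E) : ℂ :=
  (Nat.card (patDualOrbit F E S dag (patHGrp E S) lam) : ℂ) /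
    (Nat.card (patDualOrbit F E S dag (patGrp E S) lam) : ℂ) *
    ∑ᶠ ψ ∈ patDualOrbit F E S dag (patGrp E S) lam,
      @dite ℂ (f u ∈ patUAlg E S dag) (Classical.propDecidable _)
        (fun h => θ (ψ ⟨f u, h⟩)) (fun _ => 0)

/-- The superclass `K_u = {v ∈ U | f(v) ∈ G · f(u)}` of `u`, as a subset of the ambient
matrix space. -/
def patSupclass (S : Set (Fin n × Fin n))
    (dag f : Matrix (Fin n) (Fin n) E → Matrix (Fin n) (Fin n) E)
    (u : Matrix (Fin n) (Fin n) E) : Set (Matrix (Fin n) (Fin n) E) :=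
  {v | v ∈ patUGrp E S dag ∧ f v ∈ patGrpDot E S dag (f u)}

end Supercharacters

/-!
For `z ∈ 𝔥` and `x ∈ 𝔤` the product `z x z†` vanishes: `z x` is zero in the columns
`≤ n/2 + 1` since `x` is strictly upper triangular, while `z†`, whose support is that of `z`
reflected in the antidiagonal, is zero in the rows `> n/2 + 1`.
Hence `(1 + z)·x = x + z x + x z†`, and skew-symmetry of `η` gives `η(x z†) = η(z x)`, so that
`λ(h·x) = η((2h - 1) x)` for `h ∈ H` and `x ∈ 𝔲`. Both orbits are therefore parametrized by
`{x ↦ η(g x) | g ∈ H}`, because `h ↦ h⁻¹` and (as `2` is invertible) `h ↦ 2h - 1` permute `H`.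
-/

theorem setOf_exists_forall_eq_of_image_eq {α β γ : Type*} {T : Set α} {f : α → α}
    (hf : f '' T = T) {P Q : α → β → γ} (hPQ : ∀ h ∈ T, ∀ x, Q h x = P (f h) x) :
    {ψ : β → γ | ∃ h ∈ T, ∀ x, ψ x = Q h x} = {ψ | ∃ g ∈ T, ∀ x, ψ x = P g x} := by
  ext ψ
  constructor
  · rintro ⟨h, hh, hψ⟩
    exact ⟨f h, hf ▸ Set.mem_image_of_mem f hh, fun x => (hψ x).trans (hPQ h hh x)⟩
  · rintro ⟨g, hg, hψ⟩
    obtain ⟨h, hh, rfl⟩ := hf.symm ▸ hg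
    exact ⟨h, hh, fun x => (hψ x).trans (hPQ h hh x).symm⟩

section PatternAlgebra

variable {E : Type} [Field E] {n : ℕ} {S : Set (Fin n × Fin n)}
  {x y z : Matrix (Fin n) (Fin n) E}

theorem zero_mem_patAlg : (0 : Matrix (Fin n) (Fin n) E) ∈ patAlg E S :=
  fun _ _ _ => rfl

theorem add_mem_patAlg (hx : x ∈ patAlg E S) (hy : y ∈ patAlg E S) : x + y ∈ patAlg E S :=
  fun i j h => by rw [Matrix.add_apply, hx i j h, hy i j h, add_zero]

theorem sum_mem_patAlg {ι : Type*} (s : Finset ι) {f : ι → Matrix (Fin n) (Fin n) E}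
    (h : ∀ i ∈ s, f i ∈ patAlg E S) : ∑ i ∈ s, f i ∈ patAlg E S :=
  Finset.sum_induction f (· ∈ patAlg E S) (fun _ _ => add_mem_patAlg) zero_mem_patAlg h

theorem single_apply_mem_patAlg (hx : x ∈ patAlg E S) (i j : Fin n) :
    single i j (x i j) ∈ patAlg E S := by
  intro k l hkl
  by_cases hij : i = k ∧ j = l
  · obtain ⟨rfl, rfl⟩ := hij
    rw [single_apply_same, hx i j hkl]
  · exact single_apply_of_ne _ _ _ _ _ hij

theorem mul_mem_patAlg (hS2 : ∀ i j k : Fin n, (i, j) ∈ S → (j, k) ∈ S → (i, k) ∈ S)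
    (hx : x ∈ patAlg E S) (hy : y ∈ patAlg E S) : x * y ∈ patAlg E S := fun i j h => by
  rw [mul_apply]
  refine Finset.sum_eq_zero fun k _ => ?_
  by_cases hik : (i, k) ∈ S
  · rw [hy k j fun hkj => h (hS2 i k j hik hkj), mul_zero]
  · rw [hx i k hik, zero_mul]

theorem pow_apply_eq_zero_of_lt_add (hS1 : ∀ p ∈ S, p.1 < p.2) (hx : x ∈ patAlg E S) (m : ℕ)
    {i j : Fin n} (hij : (j : ℕ) < i + m) : (x ^ m) i j = 0 := by
  induction m generalizing j with
  | zero => exact one_apply_ne (by rintro rfl; omega)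
  | succ m ih =>
    rw [pow_succ, mul_apply]
    refine Finset.sum_eq_zero fun k _ => ?_
    by_cases hk : (k : ℕ) < i + m
    · rw [ih hk, zero_mul]
    · have hkj : (k, j) ∉ S := fun hkj => by
        have : (k : ℕ) < j := hS1 _ hkj
        omega
      rw [hx k j hkj, mul_zero]

theorem pow_eq_zero_of_mem_patAlg (hS1 : ∀ p ∈ S, p.1 < p.2) (hx : x ∈ patAlg E S) :
    x ^ n = 0 := by
  ext i j
  exact pow_apply_eq_zero_of_lt_add hS1 hx n (by omega)

theorem add_mem_patHAlg (hx : x ∈ patHAlg E S) (hy : y ∈ patHAlg E S) : x + y ∈ patHAlg E S :=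
  ⟨add_mem_patAlg hx.1 hy.1, fun i j h => by
    rw [Matrix.add_apply, hx.2 i j h, hy.2 i j h, add_zero]⟩

theorem smul_mem_patHAlg (c : E) (hx : x ∈ patHAlg E S) : c • x ∈ patHAlg E S :=
  ⟨fun i j h => by rw [Matrix.smul_apply, hx.1 i j h, smul_zero],
    fun i j h => by rw [Matrix.smul_apply, hx.2 i j h, smul_zero]⟩

theorem mul_mem_patHAlg (hS2 : ∀ i j k : Fin n, (i, j) ∈ S → (j, k) ∈ S → (i, k) ∈ S)
    (hx : x ∈ patAlg E S) (hy : y ∈ patHAlg E S) : x * y ∈ patHAlg E S :=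
  ⟨mul_mem_patAlg hS2 hx hy.1, fun i j h => by
    rw [mul_apply]
    exact Finset.sum_eq_zero fun k _ => by rw [hy.2 k j h, mul_zero]⟩

theorem pow_succ_mem_patHAlg (hS2 : ∀ i j k : Fin n, (i, j) ∈ S → (j, k) ∈ S → (i, k) ∈ S)
    (hy : y ∈ patHAlg E S) (m : ℕ) : y ^ (m + 1) ∈ patHAlg E S := by
  induction m with
  | zero => rwa [zero_add, pow_one]
  | succ m ih => rw [pow_succ]; exact mul_mem_patHAlg hS2 ih.1 hy

end PatternAlgebra

section PatternGroup

variable {E : Type} [Field E] {n : ℕ} {S : Set (Fin n × Fin n)} {g : Matrix (Fin n) (Fin n) E}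

/-- The right inverse of `1 + y` is the geometric series `∑ (-y)^i`, which terminates because
`y` is nilpotent. -/
theorem exists_mul_eq_one_of_mem_patHGrp (hS1 : ∀ p ∈ S, p.1 < p.2)
    (hS2 : ∀ i j k : Fin n, (i, j) ∈ S → (j, k) ∈ S → (i, k) ∈ S) (hg : g ∈ patHGrp E S) :
    ∃ g' ∈ patHGrp E S, g * g' = 1 := by
  obtain ⟨y, hy, rfl⟩ := hg
  have hny : -y ∈ patHAlg E S := by simpa using smul_mem_patHAlg (-1) hy
  refine ⟨∑ i ∈ Finset.range (n + 1), (-y) ^ i, ⟨∑ i ∈ Finset.range n, (-y) ^ (i + 1),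
    ⟨sum_mem_patAlg _ fun i _ => (pow_succ_mem_patHAlg hS2 hny i).1, fun i j h => ?_⟩, ?_⟩, ?_⟩
  · rw [Matrix.sum_apply]
    exact Finset.sum_eq_zero fun k _ => (pow_succ_mem_patHAlg hS2 hny k).2 i j h
  · rw [Finset.sum_range_succ', pow_zero, add_comm]
  · rw [← sub_neg_eq_add, mul_neg_geom_sum, pow_succ, pow_eq_zero_of_mem_patAlg hS1 hny.1,
      zero_mul, sub_zero]

theorem inv_mem_patHGrp (hS1 : ∀ p ∈ S, p.1 < p.2)
    (hS2 : ∀ i j k : Fin n, (i, j) ∈ S → (j, k) ∈ S → (i, k) ∈ S) (hg : g ∈ patHGrp E S) :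
    g⁻¹ ∈ patHGrp E S := by
  obtain ⟨g', hg', h⟩ := exists_mul_eq_one_of_mem_patHGrp hS1 hS2 hg
  rwa [inv_eq_right_inv h]

theorem inv_inv_of_mem_patHGrp (hS1 : ∀ p ∈ S, p.1 < p.2)
    (hS2 : ∀ i j k : Fin n, (i, j) ∈ S → (j, k) ∈ S → (i, k) ∈ S) (hg : g ∈ patHGrp E S) :
    g⁻¹⁻¹ = g := by
  obtain ⟨g', -, h⟩ := exists_mul_eq_one_of_mem_patHGrp hS1 hS2 hg
  exact nonsing_inv_nonsing_inv g (isUnit_det_of_right_inverse h)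

theorem image_inv_patHGrp (hS1 : ∀ p ∈ S, p.1 < p.2)
    (hS2 : ∀ i j k : Fin n, (i, j) ∈ S → (j, k) ∈ S → (i, k) ∈ S) :
    Inv.inv '' patHGrp E S = patHGrp E S := by
  refine Set.Subset.antisymm ?_ fun g hg =>
    ⟨g⁻¹, inv_mem_patHGrp hS1 hS2 hg, inv_inv_of_mem_patHGrp hS1 hS2 hg⟩
  rintro _ ⟨g, hg, rfl⟩
  exact inv_mem_patHGrp hS1 hS2 hg

theorem image_add_self_sub_one_patHGrp (h2 : (2 : E) ≠ 0) :
    (fun g => g + g - 1) '' patHGrp E S = patHGrp E S := by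
  refine (Set.image_subset_iff.2 ?_).antisymm ?_
  · rintro _ ⟨z, hz, rfl⟩
    exact ⟨z + z, add_mem_patHAlg hz hz, by dsimp only; abel⟩
  · rintro _ ⟨z, hz, rfl⟩
    refine ⟨1 + (2⁻¹ : E) • z, ⟨_, smul_mem_patHAlg _ hz, rfl⟩, ?_⟩
    dsimp only
    rw [add_add_add_comm, ← add_smul, ← two_mul (2⁻¹ : E), mul_inv_cancel₀ h2, one_smul]
    abel

end PatternGroup

theorem dagGrp_one_add {E : Type} [Field E] {n : ℕ}
    (dag : Matrix (Fin n) (Fin n) E → Matrix (Fin n) (Fin n) E) (z : Matrix (Fin n) (Fin n) E) :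
    dagGrp E dag (1 + z) = 1 + dag z := by
  rw [dagGrp, add_sub_cancel_left]

namespace IsPatternAntiInvolution

variable {F : Type} [Field F] {E : Type} [Field E] [Algebra F E] {n : ℕ}
  {S : Set (Fin n × Fin n)} {dag : Matrix (Fin n) (Fin n) E → Matrix (Fin n) (Fin n) E}
  {x z : Matrix (Fin n) (Fin n) E}

theorem map_zero (hdag : IsPatternAntiInvolution F E S dag) : dag 0 = 0 := by
  simpa using hdag.map_smul 0 0 zero_mem_patAlg

theorem map_sum (hdag : IsPatternAntiInvolution F E S dag) {ι : Type*} (s : Finset ι)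
    {f : ι → Matrix (Fin n) (Fin n) E} (h : ∀ i ∈ s, f i ∈ patAlg E S) :
    dag (∑ i ∈ s, f i) = ∑ i ∈ s, dag (f i) := by
  classical
  induction s using Finset.induction_on with
  | empty => simpa using hdag.map_zero
  | @insert a s ha ih =>
    rw [Finset.forall_mem_insert] at h
    rw [Finset.sum_insert ha, Finset.sum_insert ha,
      hdag.map_add _ h.1 _ (sum_mem_patAlg s h.2), ih h.2]

theorem apply_eq_zero_of_forall_apply_rev_eq_zero (hdag : IsPatternAntiInvolution F E S dag)
    (hz : z ∈ patAlg E S) {l : Fin n} (hl : ∀ i, z i l.rev = 0) (m : Fin n) : dag z l m = 0 := by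
  conv_lhs => rw [matrix_eq_sum_single z]
  rw [hdag.map_sum _ fun i _ => sum_mem_patAlg _ fun j _ => single_apply_mem_patAlg hz i j,
    Matrix.sum_apply]
  refine Finset.sum_eq_zero fun i _ => ?_
  rw [hdag.map_sum _ fun j _ => single_apply_mem_patAlg hz i j, Matrix.sum_apply]
  refine Finset.sum_eq_zero fun j _ => ?_
  by_cases hzij : z i j = 0
  · rw [hzij, single_zero, hdag.map_zero, Matrix.zero_apply]
  obtain ⟨β, -, hβ⟩ := hdag.elementary i j (by_contra fun h => hzij (hz i j h)) _ hzij
  have hjl : j.rev ≠ l := by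
    rintro rfl
    exact hzij (by simpa using hl i)
  rw [hβ]
  exact single_apply_of_ne _ _ _ _ _ fun h => hjl h.1

theorem mul_mul_eq_zero_of_mem_patHAlg (hdag : IsPatternAntiInvolution F E S dag)
    (hS1 : ∀ p ∈ S, p.1 < p.2) (hz : z ∈ patHAlg E S) (hx : x ∈ patAlg E S) :
    z * x * dag z = 0 := by
  ext i j
  rw [mul_apply]
  refine Finset.sum_eq_zero fun l _ => ?_
  by_cases hl : n / 2 < (l : ℕ)
  · rw [hdag.apply_eq_zero_of_forall_apply_rev_eq_zero hz.1
      (fun i => hz.2 i l.rev (by rw [Fin.val_rev]; omega)), mul_zero]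
  · have hzx : (z * x) i l = 0 := by
      rw [mul_apply]
      refine Finset.sum_eq_zero fun k _ => ?_
      by_cases hk : (k : ℕ) + 1 ≤ n / 2
      · rw [hz.2 i k hk, zero_mul]
      · have hkl : (k, l) ∉ S := fun hkl => by
          have : (k : ℕ) < l := hS1 _ hkl
          omega
        rw [hx k l hkl, mul_zero]
    rw [hzx, zero_mul]

theorem mul_mul_dagGrp_mem_patUAlg (hdag : IsPatternAntiInvolution F E S dag)
    (hS2 : ∀ i j k : Fin n, (i, j) ∈ S → (j, k) ∈ S → (i, k) ∈ S)
    {g : Matrix (Fin n) (Fin n) E} (hg : g ∈ patGrp E S) (hx : x ∈ patUAlg E S dag) :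
    g * x * dagGrp E dag g ∈ patUAlg E S dag := by
  obtain ⟨z, hz, rfl⟩ := hg
  obtain ⟨hx, hxd⟩ := hx
  have hdz := hdag.map_mem z hz
  have hzx := mul_mem_patAlg hS2 hz hx
  have hxz := mul_mem_patAlg hS2 hx hdz
  have hzxz := mul_mem_patAlg hS2 hz hxz
  have hdag_zx : dag (z * x) = -(x * dag z) := by rw [hdag.map_mul z hz x hx, hxd, neg_mul]
  have hdag_xz : dag (x * dag z) = -(z * x) := by
    rw [hdag.map_mul x hx _ hdz, hdag.invol z hz, hxd, mul_neg]
  have hdag_zxz : dag (z * (x * dag z)) = -(z * (x * dag z)) := by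
    rw [hdag.map_mul z hz _ hxz, hdag_xz, neg_mul, mul_assoc]
  have hexp : (1 + z) * x * (1 + dag z) = x + z * x + (x * dag z + z * (x * dag z)) := by
    noncomm_ring
  rw [dagGrp_one_add, hexp]
  refine ⟨add_mem_patAlg (add_mem_patAlg hx hzx) (add_mem_patAlg hxz hzxz), ?_⟩
  rw [hdag.map_add _ (add_mem_patAlg hx hzx) _ (add_mem_patAlg hxz hzxz),
    hdag.map_add _ hx _ hzx, hdag.map_add _ hxz _ hzxz, hxd, hdag_zx, hdag_xz, hdag_zxz]
  abel

theorem apply_mul_dag_eq_apply_mul (hdag : IsPatternAntiInvolution F E S dag)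
    (hS2 : ∀ i j k : Fin n, (i, j) ∈ S → (j, k) ∈ S → (i, k) ∈ S)
    {eta : Module.Dual F (Matrix (Fin n) (Fin n) E)}
    (heta_skew : ∀ x ∈ patAlg E S, eta (dag x) = -eta x)
    (hz : z ∈ patAlg E S) (hx : x ∈ patUAlg E S dag) : eta (x * dag z) = eta (z * x) := by
  have h := heta_skew _ (mul_mem_patAlg hS2 hx.1 (hdag.map_mem z hz))
  rwa [hdag.map_mul x hx.1 _ (hdag.map_mem z hz), hdag.invol z hz, hx.2, mul_neg, map_neg,
    neg_inj, eq_comm] at h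

theorem apply_mul_mul_dagGrp_eq (hdag : IsPatternAntiInvolution F E S dag)
    (hS1 : ∀ p ∈ S, p.1 < p.2) (hS2 : ∀ i j k : Fin n, (i, j) ∈ S → (j, k) ∈ S → (i, k) ∈ S)
    {lam eta : Module.Dual F (Matrix (Fin n) (Fin n) E)}
    (heta_ext : ∀ x ∈ patUAlg E S dag, eta x = lam x)
    (heta_skew : ∀ x ∈ patAlg E S, eta (dag x) = -eta x)
    {h : Matrix (Fin n) (Fin n) E} (hh : h ∈ patHGrp E S) (hx : x ∈ patUAlg E S dag) :
    lam (h * x * dagGrp E dag h) = eta ((h + h - 1) * x) := by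
  obtain ⟨z, hz, rfl⟩ := hh
  rw [← heta_ext _ (hdag.mul_mul_dagGrp_mem_patUAlg hS2 ⟨z, hz.1, rfl⟩ hx), dagGrp_one_add]
  have hexp : (1 + z) * x * (1 + dag z) = x + z * x + x * dag z := by
    rw [← add_zero (x + z * x + x * dag z), ← hdag.mul_mul_eq_zero_of_mem_patHAlg hS1 hz hx.1]
    noncomm_ring
  have hexp' : (1 + z + (1 + z) - 1) * x = x + z * x + z * x := by noncomm_ring
  rw [hexp, hexp', _root_.map_add, _root_.map_add, _root_.map_add, _root_.map_add,
    hdag.apply_mul_dag_eq_apply_mul hS2 heta_skew hz.1 hx]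

end IsPatternAntiInvolution

theorem restriction_of_H_orbit_of_extension_eq_H_orbit_general
    (F : Type) [Field F] (E : Type) [Field E] [Algebra F E]
    (hodd : ringChar F ≠ 2)
    {n : ℕ} (S : Set (Fin n × Fin n))
    (hS1 : ∀ p ∈ S, p.1 < p.2)
    (hS2 : ∀ i j k : Fin n, (i, j) ∈ S → (j, k) ∈ S → (i, k) ∈ S)
    (dag : Matrix (Fin n) (Fin n) E → Matrix (Fin n) (Fin n) E)
    (hdag : IsPatternAntiInvolution F E S dag)
    (lam eta : Module.Dual F (Matrix (Fin n) (Fin n) E))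
    (heta_ext : ∀ x ∈ patUAlg E S dag, eta x = lam x)
    (heta_skew : ∀ x ∈ patAlg E S, eta (dag x) = - eta x) :
    {ψ : ↥(patUAlg E S dag) → F | ∃ h ∈ patHGrp E S,
        ∀ x : ↥(patUAlg E S dag),
          ψ x = eta (h⁻¹ * (x : Matrix (Fin n) (Fin n) E))} =
      {ψ : ↥(patUAlg E S dag) → F | ∃ h ∈ patHGrp E S,
        ∀ x : ↥(patUAlg E S dag),
          ψ x = lam (h⁻¹ * (x : Matrix (Fin n) (Fin n) E) * dagGrp E dag h⁻¹)} := by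
  have h2 : (2 : E) ≠ 0 := Ring.two_ne_zero (by rwa [← Algebra.ringChar_eq F E])
  have hinv := image_inv_patHGrp (E := E) hS1 hS2
  have hdouble : (fun h => h⁻¹ + h⁻¹ - 1) '' patHGrp E S = patHGrp E S := by
    rw [← Set.image_image (fun g => g + g - 1), hinv, image_add_self_sub_one_patHGrp h2]
  calc _ = {ψ : patUAlg E S dag → F | ∃ g ∈ patHGrp E S, ∀ x, ψ x = eta (g * x)} :=
        setOf_exists_forall_eq_of_image_eq hinv fun _ _ _ => rfl
    _ = _ := (setOf_exists_forall_eq_of_image_eq hdouble fun h hh x =>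
        hdag.apply_mul_mul_dagGrp_eq hS1 hS2 heta_ext heta_skew
          (inv_mem_patHGrp hS1 hS2 hh) x.2).symm

/-- With `G = 1 + 𝔤` a pattern subgroup, `†` an anti-involution as above,
`𝔲 = {x ∈ 𝔤 | x† = −x}`, `𝔥 = {x ∈ 𝔤 | x_ij = 0 if j ≤ n/2}` and `H = 1 + 𝔥`:
let `λ ∈ 𝔲*` (represented by a functional `lam` on the full matrix space) and let
`η ∈ 𝔤*` be its unique extension with `η(x†) = −η(x)` (represented by a functional `eta`
satisfying the two characterizing properties).  Then `{μ|_𝔲 | μ ∈ Hη} = H·λ`, where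
`(hη)(x) = η(h⁻¹x)` and `(h·λ)(x) = λ(h⁻¹ x (h⁻¹)†)`, both orbits being recorded as sets of
functions `𝔲 → F`. -/
theorem restriction_of_H_orbit_of_extension_eq_H_orbit
    (F : Type) [Field F] [Fintype F] (E : Type) [Field E] [Fintype E] [Algebra F E]
    (hodd : ringChar F ≠ 2)
    {n : ℕ} (S : Set (Fin n × Fin n))
    (hS1 : ∀ p ∈ S, p.1 < p.2)
    (hS2 : ∀ i j k : Fin n, (i, j) ∈ S → (j, k) ∈ S → (i, k) ∈ S)
    (dag : Matrix (Fin n) (Fin n) E → Matrix (Fin n) (Fin n) E)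
    (hdag : IsPatternAntiInvolution F E S dag)
    (lam eta : Module.Dual F (Matrix (Fin n) (Fin n) E))
    (heta_ext : ∀ x ∈ patUAlg E S dag, eta x = lam x)
    (heta_skew : ∀ x ∈ patAlg E S, eta (dag x) = - eta x) :
    {ψ : ↥(patUAlg E S dag) → F | ∃ h ∈ patHGrp E S,
        ∀ x : ↥(patUAlg E S dag),
          ψ x = eta (h⁻¹ * (x : Matrix (Fin n) (Fin n) E))} =
      {ψ : ↥(patUAlg E S dag) → F | ∃ h ∈ patHGrp E S,
        ∀ x : ↥(patUAlg E S dag),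
          ψ x = lam (h⁻¹ * (x : Matrix (Fin n) (Fin n) E) * dagGrp E dag h⁻¹)} :=
  restriction_of_H_orbit_of_extension_eq_H_orbit_general F E hodd S hS1 hS2 dag hdag lam eta
    heta_ext heta_skew
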